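/- arXiv:2312.09400 — 2 statements merged into one kernel-verified Lean document; each statement's English description precedes it below -/
import Mathlib

section
/- Let $n = 7k + 2^k$ and suppose $A_1, \ldots, A_{2^k} \subseteq \mathbb{F}_2^{7k}$ are pairwise disjoint affine subspaces, $A_i = V_i + a_i$ with $\dim V_i = 2k$. Define $f : \mathbb{F}_2^{7k} \times \mathbb{F}_2^{2^k} \to \{-1,1\}$ by $f(x,y) = (-1)^{y_i}$ if $x \in A_i$ and $f(x,y) = 1$ otherwise. Then for each $i$, every $\gamma \in (V_i^\perp \times \{0\}) + (0, e_i)$ satisfies $\hat{f}(\gamma) \neq 0$; consequently $|\mathrm{supp}(\hat f)| \geq 2^{6k}$. -/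
/-!
For fixed `x`, the fibre `f (x, ·)` is the character `y ↦ (-1)^(y j)` when `x ∈ A j` and the
trivial character when `x` lies in no `A j`. Summing over `y` first, it pairs with `(-1)^(y i)` to
`2^(2^k)` when `x ∈ A i` and to `0` otherwise, so
`2^n f̂(γ, eᵢ) = 2^(2^k) ∑_{x ∈ A i} (-1)^⟨x, γ⟩`. For `γ ⊥ V i` the summand is constant on the
coset `A i = V i + a i`, and the sum is `|A i| (-1)^⟨a i, γ⟩ ≠ 0`. The sets `V iᗮ × {eᵢ}` are
pairwise disjoint and each has at least `2^(7k - 2k)` elements, which gives the count.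
-/

/-- The standard bilinear form on `𝔽₂ⁿ`. -/
def ip {n : ℕ} (x y : Fin n → ZMod 2) : ZMod 2 := ∑ i, x i * y i

/-- Orthogonal complement of a subspace w.r.t. the standard bilinear form. -/
def perp {n : ℕ} (W : Submodule (ZMod 2) (Fin n → ZMod 2)) : Set (Fin n → ZMod 2) :=
  {v | ∀ w ∈ W, ip v w = 0}

/-- Fourier coefficient of a function on `𝔽₂^{7k} × 𝔽₂^{2^k}`. -/
noncomputable def fhatP (k : ℕ)
    (f : (Fin (7 * k) → ZMod 2) × (Fin (2 ^ k) → ZMod 2) → ℝ)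
    (γ : (Fin (7 * k) → ZMod 2) × (Fin (2 ^ k) → ZMod 2)) : ℝ :=
  (∑ z : (Fin (7 * k) → ZMod 2) × (Fin (2 ^ k) → ZMod 2),
      f z * (-1 : ℝ) ^ (ip z.1 γ.1 + ip z.2 γ.2).val) / 2 ^ (7 * k + 2 ^ k)

def signChar : AddChar (ZMod 2) ℝ where
  toFun a := (-1) ^ a.val
  map_zero_eq_one' := rfl
  map_add_eq_mul' a b := by rw [← pow_add, ZMod.val_add, ← neg_one_pow_eq_pow_mod_two]

lemma signChar_one : signChar 1 = -1 := by
  show (-1 : ℝ) ^ (1 : ZMod 2).val = -1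
  norm_num [ZMod.val_one]

lemma signChar_mul_self (a : ZMod 2) : signChar a * signChar a = 1 := by
  rw [← AddChar.map_add_eq_mul, CharTwo.add_self_eq_zero, AddChar.map_zero_eq_one]

lemma signChar_ne_zero (a : ZMod 2) : signChar a ≠ 0 :=
  pow_ne_zero _ (by norm_num)

lemma sum_signChar_dotProduct_eq_zero {ι : Type*} [Fintype ι] [DecidableEq ι] {c : ι → ZMod 2}
    (hc : c ≠ 0) :
    ∑ y : ι → ZMod 2, signChar (y ⬝ᵥ c) = 0 := by
  let ψ : AddChar (ι → ZMod 2) ℝ :=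
    signChar.compAddMonoidHom ((dotProductBilin (ZMod 2) (ZMod 2)).flip c).toAddMonoidHom
  obtain ⟨j, hj⟩ := Function.ne_iff.mp hc
  have hψ : ψ ≠ 1 := AddChar.ne_one_iff.mpr ⟨Pi.single j 1, by
    have hcj : c j = 1 := (by decide : ∀ t : ZMod 2, t ≠ 0 → t = 1) _ hj
    norm_num [ψ, dotProductBilin, single_dotProduct, hcj, signChar_one]⟩
  exact AddChar.sum_eq_zero_of_ne_one hψ

lemma dotProduct_eq_of_mem_coset {ι : Type*} [Fintype ι] {V : Submodule (ZMod 2) (ι → ZMod 2)}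
    {a γ x : ι → ZMod 2} (hγ : ∀ v ∈ V, γ ⬝ᵥ v = 0)
    (hx : x ∈ (· + a) '' (V : Set (ι → ZMod 2))) :
    x ⬝ᵥ γ = a ⬝ᵥ γ := by
  obtain ⟨v, hv, rfl⟩ := hx
  rw [add_dotProduct, dotProduct_comm, hγ v hv, zero_add]

lemma card_orthogonal_ge {K ι : Type*} [Field K] [Fintype K] [Fintype ι]
    (W : Submodule K (ι → K)) :
    Fintype.card K ^ (Fintype.card ι - Module.finrank K W) ≤
      Nat.card {v : ι → K | ∀ w ∈ W, v ⬝ᵥ w = 0} := by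
  classical
  let ψ : (ι → K) →ₗ[K] Module.Dual K W := (dotProductBilin K K).compl₂ W.subtype
  have hker : {v : ι → K | ∀ w ∈ W, v ⬝ᵥ w = 0} = LinearMap.ker ψ := by
    ext v
    simp [ψ, LinearMap.ext_iff, dotProductBilin]
  have hrange : Module.finrank K (LinearMap.range ψ) ≤ Module.finrank K W :=
    (Submodule.finrank_le _).trans Subspace.dual_finrank_eq.le
  have hrank := LinearMap.finrank_range_add_finrank_ker ψ
  rw [Module.finrank_fintype_fun_eq_card] at hrank
  rw [hker, SetLike.coe_sort_coe, Nat.card_eq_fintype_card,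
    Module.card_eq_pow_finrank (K := K) (V := LinearMap.ker ψ)]
  exact Nat.pow_le_pow_right (Fintype.card_pos (α := K)) (by omega)

section FiberSums

variable {X ι : Type*} [Fintype ι] [DecidableEq ι] {A : ι → Set X}
  {f : X × (ι → ZMod 2) → ℝ} {x : X} {i : ι}

lemma sum_mul_signChar_of_mem (hf₁ : ∀ x y i, x ∈ A i → f (x, y) = (-1 : ℝ) ^ (y i).val)
    (hx : x ∈ A i) :
    ∑ y : ι → ZMod 2, f (x, y) * signChar (y i) = Fintype.card (ι → ZMod 2) := by
  simp_rw [hf₁ x _ i hx]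
  exact (Finset.sum_congr rfl fun y _ => signChar_mul_self (y i)).trans (by simp)

/-- Off `A i` the fibre `f (x, ·)` is a character `y ↦ (-1)^(y ⬝ c)` with `c ≠ eᵢ`. -/
lemma sum_mul_signChar_of_notMem (hf₁ : ∀ x y i, x ∈ A i → f (x, y) = (-1 : ℝ) ^ (y i).val)
    (hf₂ : ∀ x y, (∀ i, x ∉ A i) → f (x, y) = 1) (hx : x ∉ A i) :
    ∑ y : ι → ZMod 2, f (x, y) * signChar (y i) = 0 := by
  obtain ⟨c, hci, hc⟩ : ∃ c : ι → ZMod 2, c ≠ Pi.single i 1 ∧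
      ∀ y, f (x, y) = signChar (y ⬝ᵥ c) := by
    by_cases h : ∃ j, x ∈ A j
    · obtain ⟨j, hj⟩ := h
      have hji : j ≠ i := by rintro rfl; exact hx hj
      refine ⟨Pi.single j 1, fun h => hji ?_, fun y => ?_⟩
      · simpa [Pi.single_apply] using congrFun h j
      · rw [hf₁ x y j hj, dotProduct_single, mul_one]
        rfl
    · simp only [not_exists] at h
      refine ⟨0, (Pi.single_ne_zero_iff.mpr one_ne_zero).symm, fun y => ?_⟩
      rw [hf₂ x y h, dotProduct_zero, AddChar.map_zero_eq_one]
  have hc' : c + Pi.single i 1 ≠ 0 := fun h =>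
    hci (funext fun j => CharTwo.add_eq_zero.mp (congrFun h j))
  calc ∑ y : ι → ZMod 2, f (x, y) * signChar (y i)
      = ∑ y : ι → ZMod 2, signChar (y ⬝ᵥ (c + Pi.single i 1)) := by
        simp only [hc, dotProduct_add, dotProduct_single, mul_one, AddChar.map_add_eq_mul]
    _ = 0 := by exact sum_signChar_dotProduct_eq_zero hc'

end FiberSums

lemma sum_mul_signChar_ne_zero {m ι : Type*} [Fintype m] [DecidableEq m] [Fintype ι]
    [DecidableEq ι]
    {V : Submodule (ZMod 2) (m → ZMod 2)} {a γ : m → ZMod 2} {A : ι → Set (m → ZMod 2)}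
    {f : (m → ZMod 2) × (ι → ZMod 2) → ℝ} {i : ι}
    (hA : A i = (· + a) '' (V : Set (m → ZMod 2))) (hγ : ∀ v ∈ V, γ ⬝ᵥ v = 0)
    (hf₁ : ∀ x y i, x ∈ A i → f (x, y) = (-1 : ℝ) ^ (y i).val)
    (hf₂ : ∀ x y, (∀ i, x ∉ A i) → f (x, y) = 1) :
    ∑ z : (m → ZMod 2) × (ι → ZMod 2),
      f z * signChar (z.1 ⬝ᵥ γ + z.2 ⬝ᵥ Pi.single i 1) ≠ 0 := by
  classical
  have hfiber : ∀ x, ∑ y, f (x, y) * signChar (x ⬝ᵥ γ + y ⬝ᵥ Pi.single i 1) =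
      if x ∈ A i then Fintype.card (ι → ZMod 2) * signChar (a ⬝ᵥ γ) else 0 := by
    intro x
    simp_rw [AddChar.map_add_eq_mul, dotProduct_single, mul_one, mul_left_comm _ (signChar _),
      ← Finset.mul_sum]
    split_ifs with hx
    · rw [sum_mul_signChar_of_mem hf₁ hx, dotProduct_eq_of_mem_coset hγ (hA ▸ hx), mul_comm]
    · rw [sum_mul_signChar_of_notMem hf₁ hf₂ hx, mul_zero]
  have ha : a ∈ A i := hA ▸ ⟨0, V.zero_mem, zero_add a⟩
  rw [Fintype.sum_prod_type, Finset.sum_congr rfl fun x _ => hfiber x, Finset.sum_ite,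
    Finset.sum_const_zero, add_zero, Finset.sum_const, nsmul_eq_mul]
  exact mul_ne_zero (Nat.cast_ne_zero.mpr (Finset.card_ne_zero_of_mem (by simpa using ha)))
    (mul_ne_zero (by positivity) (signChar_ne_zero _))

lemma sum_card_le_card_of_mk_single_mem {M R ι : Type*} [Finite M] [Finite R] [Fintype ι]
    [DecidableEq ι] [Zero R] [One R] [NeZero (1 : R)] {S : Set (M × (ι → R))}
    {P : ι → Set M} (hP : ∀ i, ∀ γ ∈ P i, (γ, Pi.single i 1) ∈ S) :
    ∑ i, Nat.card (P i) ≤ Nat.card S := by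
  rw [← Nat.card_sigma]
  refine Nat.card_le_card_of_injective (fun p => ⟨(p.2, Pi.single p.1 1), hP p.1 p.2 p.2.2⟩) ?_
  rintro ⟨i, γ, hγ⟩ ⟨j, δ, hδ⟩ h
  simp only [Subtype.mk.injEq, Prod.mk.injEq] at h
  obtain ⟨rfl, hij⟩ := h
  obtain rfl : i = j := by
    by_contra hne
    simpa [Pi.single_apply, hne] using congrFun hij i
  rfl

theorem stmt7_general (k : ℕ)
    (V : Fin (2 ^ k) → Submodule (ZMod 2) (Fin (7 * k) → ZMod 2))
    (a : Fin (2 ^ k) → Fin (7 * k) → ZMod 2)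
    (A : Fin (2 ^ k) → Set (Fin (7 * k) → ZMod 2))
    (hA : ∀ i, A i = (· + a i) '' (V i : Set (Fin (7 * k) → ZMod 2)))
    (hdim : ∀ i, Module.finrank (ZMod 2) (V i) = 2 * k)
    (f : (Fin (7 * k) → ZMod 2) × (Fin (2 ^ k) → ZMod 2) → ℝ)
    (hf₁ : ∀ x y i, x ∈ A i → f (x, y) = (-1 : ℝ) ^ (y i).val)
    (hf₂ : ∀ x y, (∀ i, x ∉ A i) → f (x, y) = 1) :
    (∀ i : Fin (2 ^ k), ∀ γ ∈ perp (V i),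
        fhatP k f (γ, Pi.single i 1) ≠ 0) ∧
      2 ^ (6 * k) ≤
        Nat.card {γ : (Fin (7 * k) → ZMod 2) × (Fin (2 ^ k) → ZMod 2) //
          fhatP k f γ ≠ 0} := by
  -- `ip` is `dotProduct` and `signChar a` is `(-1) ^ a.val` by definition.
  have hsupp : ∀ i : Fin (2 ^ k), ∀ γ ∈ perp (V i), fhatP k f (γ, Pi.single i 1) ≠ 0 :=
    fun i γ hγ => div_ne_zero (sum_mul_signChar_ne_zero (hA i) hγ hf₁ hf₂) (by positivity)
  refine ⟨hsupp, ?_⟩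
  calc 2 ^ (6 * k) = ∑ _i : Fin (2 ^ k), 2 ^ (7 * k - 2 * k) := by
        rw [Finset.sum_const, Finset.card_univ, Fintype.card_fin, smul_eq_mul, ← pow_add]
        congr 1
        omega
    _ ≤ ∑ i, Nat.card (perp (V i)) := Finset.sum_le_sum fun i _ => by
        have h := card_orthogonal_ge (V i)
        simp only [ZMod.card, Fintype.card_fin, hdim i] at h
        exact h
    _ ≤ _ := sum_card_le_card_of_mk_single_mem (S := {γ | fhatP k f γ ≠ 0}) hsupp

theorem stmt7 (k : ℕ)
    (V : Fin (2 ^ k) → Submodule (ZMod 2) (Fin (7 * k) → ZMod 2))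
    (a : Fin (2 ^ k) → Fin (7 * k) → ZMod 2)
    (A : Fin (2 ^ k) → Set (Fin (7 * k) → ZMod 2))
    (hA : ∀ i, A i = (· + a i) '' (V i : Set (Fin (7 * k) → ZMod 2)))
    (hdim : ∀ i, Module.finrank (ZMod 2) (V i) = 2 * k)
    (hdisj : ∀ i j, i ≠ j → A i ∩ A j = ∅)
    (f : (Fin (7 * k) → ZMod 2) × (Fin (2 ^ k) → ZMod 2) → ℝ)
    (hf₁ : ∀ x y i, x ∈ A i → f (x, y) = (-1 : ℝ) ^ (y i).val)
    (hf₂ : ∀ x y, (∀ i, x ∉ A i) → f (x, y) = 1) :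
    (∀ i : Fin (2 ^ k), ∀ γ ∈ perp (V i),
        fhatP k f (γ, Pi.single i 1) ≠ 0) ∧
      2 ^ (6 * k) ≤
        Nat.card {γ : (Fin (7 * k) → ZMod 2) × (Fin (2 ^ k) → ZMod 2) //
          fhatP k f γ ≠ 0} :=
  stmt7_general k V a A hA hdim f hf₁ hf₂
end

section
/- Let $f$ be the depth-$d$ complete decision tree function with Fourier support $\S = \bigcup_i \{s \subseteq P_i : \N(i) \in s\}$ as above. Let $\gamma_1, \gamma_2 \in \S$ with $\gamma_1 \subseteq P_i$, $\N(i) \in \gamma_1$, $\gamma_2 \subseteq P_j$, $\N(j) \in \gamma_2$, and $\N(i) \neq \N(j)$. If the lowest common ancestor of leaves $i$ and $j$ is at depth $\ell$, then the number of pairs $(\beta_1, \beta_2) \in \S \times \S$ with $\beta_1 + \gamma_1 = \beta_2 + \gamma_2$ is at most $2^{\ell + 2}$. In particular, $|(\S + \gamma_1) \cap (\S + \gamma_2)| \le 2^{\ell+2}$. -/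
/-- Parent of a node in heap numbering (root `0`, children of `v` are `2v+1`, `2v+2`). -/
def parentN (v : ℕ) : ℕ := (v - 1) / 2

/-- `α` is (the characteristic vector of) a subset of the path `P_L` to leaf `L`
containing the node `N(L) = parentN L` adjacent to `L`. -/
def onPath (d : ℕ) (L : ℕ) (α : Fin (2 ^ d - 1) → ZMod 2) : Prop :=
  (∀ v : Fin (2 ^ d - 1), α v ≠ 0 →
      ∃ t, 1 ≤ t ∧ t ≤ d ∧ parentN^[t] L = (v : ℕ)) ∧
    (∃ v : Fin (2 ^ d - 1), (v : ℕ) = parentN L ∧ α v ≠ 0)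

/-- The Fourier support of the depth-`d` complete decision tree function:
subsets of some root-to-leaf path containing the node adjacent to the leaf. -/
def suppS (d : ℕ) : Set (Fin (2 ^ d - 1) → ZMod 2) :=
  {α | ∃ L : ℕ, 2 ^ d - 1 ≤ L ∧ L < 2 ^ (d + 1) - 1 ∧ onPath d L α}

/- ### auxiliary lemmas -/

lemma parentN_range (d L : ℕ) (hL1 : 2 ^ d - 1 ≤ L) (hL2 : L < 2 ^ (d + 1) - 1) :
    ∀ t, t ≤ d → 2 ^ (d - t) - 1 ≤ parentN^[t] L ∧ parentN^[t] L < 2 ^ (d - t + 1) - 1 := by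
  intro t
  induction t with
  | zero =>
    intro _
    simp only [Function.iterate_zero, id_eq, Nat.sub_zero]
    exact ⟨hL1, hL2⟩
  | succ n ih =>
    intro h
    obtain ⟨h1, h2⟩ := ih (by omega)
    rw [Function.iterate_succ_apply']
    have hx : parentN (parentN^[n] L) = (parentN^[n] L - 1) / 2 := rfl
    rw [hx]
    have e3 : d - n = (d - (n + 1)) + 1 := by omega
    have e1 : 2 ^ (d - n) = 2 * 2 ^ (d - (n + 1)) := by rw [e3, pow_succ]; ring
    have e2 : 2 ^ (d - n + 1) = 2 * 2 ^ (d - n) := by rw [pow_succ]; ring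
    have e4 : 1 ≤ 2 ^ (d - (n + 1)) := Nat.one_le_two_pow
    have e5 : 2 ^ (d - (n + 1) + 1) = 2 ^ (d - n) := by rw [← e3]
    omega

lemma depth_eq (d L M t t' : ℕ) (hL1 : 2 ^ d - 1 ≤ L) (hL2 : L < 2 ^ (d + 1) - 1)
    (hM1 : 2 ^ d - 1 ≤ M) (hM2 : M < 2 ^ (d + 1) - 1) (ht : t ≤ d) (ht' : t' ≤ d)
    (h : parentN^[t] L = parentN^[t'] M) : t = t' := by
  obtain ⟨a1, a2⟩ := parentN_range d L hL1 hL2 t ht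
  obtain ⟨b1, b2⟩ := parentN_range d M hM1 hM2 t' ht'
  by_contra hne
  rcases Nat.lt_or_ge t t' with hlt | hge
  · have h5 : d - t' + 1 ≤ d - t := by omega
    have h6 : 2 ^ (d - t' + 1) ≤ 2 ^ (d - t) := Nat.pow_le_pow_right (by norm_num) h5
    omega
  · have hlt : t' < t := by omega
    have h5 : d - t + 1 ≤ d - t' := by omega
    have h6 : 2 ^ (d - t + 1) ≤ 2 ^ (d - t') := Nat.pow_le_pow_right (by norm_num) h5
    omega

lemma iterate_eq_of_le {f : ℕ → ℕ} {a b m : ℕ} (h : f^[m] a = f^[m] b) :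
    ∀ t, m ≤ t → f^[t] a = f^[t] b := by
  intro t ht
  rw [show t = (t - m) + m by omega, Function.iterate_add_apply, Function.iterate_add_apply, h]

lemma iterate_ne_of_ge {f : ℕ → ℕ} {a b m : ℕ} (h : f^[m] a ≠ f^[m] b) :
    ∀ t, t ≤ m → f^[t] a ≠ f^[t] b := fun t ht he => h (iterate_eq_of_le he m ht)

lemma path_switch (L M : ℕ) (h : parentN L = parentN M) (t : ℕ) (ht : 1 ≤ t) :
    parentN^[t] L = parentN^[t] M := by
  have e : t = (t - 1) + 1 := by omega
  rw [e, Function.iterate_add_apply, Function.iterate_add_apply]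
  simp [h]

lemma supp_zero (d L : ℕ) (β : Fin (2 ^ d - 1) → ZMod 2) (hβ : onPath d L β)
    (v : Fin (2 ^ d - 1)) (hv : ∀ t, 1 ≤ t → t ≤ d → parentN^[t] L ≠ (v : ℕ)) : β v = 0 := by
  by_contra h
  obtain ⟨t, h1, h2, h3⟩ := hβ.1 v h
  exact hv t h1 h2 h3

lemma parent_id (d L M : ℕ) (hd : 1 ≤ d)
    (hL1 : 2 ^ d - 1 ≤ L) (hL2 : L < 2 ^ (d + 1) - 1)
    (hM1 : 2 ^ d - 1 ≤ M) (hM2 : M < 2 ^ (d + 1) - 1)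
    (β : Fin (2 ^ d - 1) → ZMod 2) (hβ : onPath d L β)
    (pm : Fin (2 ^ d - 1)) (hpm : (pm : ℕ) = parentN M) (h : β pm ≠ 0) :
    ∀ t, 1 ≤ t → parentN^[t] L = parentN^[t] M := by
  obtain ⟨t, h1, h2, h3⟩ := hβ.1 pm h
  have h4 : parentN^[t] L = parentN^[1] M := by simpa using h3.trans hpm
  have ht1 : t = 1 := depth_eq d L M t 1 hL1 hL2 hM1 hM2 h2 hd h4
  subst ht1
  have h5 : parentN L = parentN M := by simpa using h4
  exact path_switch L M h5

lemma zadd : ∀ a b c e : ZMod 2, a + b = c + e → c = a + b + e := by decide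
lemma zf1 : ∀ a b c : ZMod 2, a ≠ 0 → b ≠ 0 → c = 0 → a + b + c = 0 := by decide
lemma zf2 : ∀ a b c : ZMod 2, a = 0 → b ≠ 0 → c = 0 → a + b + c ≠ 0 := by decide
lemma zf3 : ∀ a b c : ZMod 2, a = 0 → b = 0 → c ≠ 0 → a + b + c ≠ 0 := by decide
lemma zf4 : ∀ a b c : ZMod 2, a + b + c = 0 → b = 0 → c ≠ 0 → a ≠ 0 := by decide
lemma zf5 : ∀ a b c : ZMod 2, a + b + c = 0 → a = b + c := by decide
lemma zf6 : ∀ a b : ZMod 2, a + b + b = a := by decide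

lemma eqv_lemma {n : ℕ} (β₁ γ₁ β₂ γ₂ : Fin n → ZMod 2) (h : β₁ + γ₁ = β₂ + γ₂)
    (w : Fin n) : β₂ w = β₁ w + γ₁ w + γ₂ w :=
  zadd _ _ _ _ (congrFun h w)

open scoped Classical in
lemma determined (d i j ℓ : ℕ) (hd : 1 ≤ d)
    (hi1 : 2 ^ d - 1 ≤ i) (hi2 : i < 2 ^ (d + 1) - 1)
    (hj1 : 2 ^ d - 1 ≤ j) (hj2 : j < 2 ^ (d + 1) - 1)
    (γ₁ γ₂ : Fin (2 ^ d - 1) → ZMod 2)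
    (hγ₁ : onPath d i γ₁) (hγ₂ : onPath d j γ₂)
    (hN : parentN i ≠ parentN j) (hℓ : ℓ < d)
    (hlca1 : parentN^[d - ℓ] i = parentN^[d - ℓ] j)
    (hlca2 : parentN^[d - ℓ - 1] i ≠ parentN^[d - ℓ - 1] j)
    (pi pj : Fin (2 ^ d - 1)) (hpi : (pi : ℕ) = parentN i) (hpj : (pj : ℕ) = parentN j)
    (β₁ β₂ : Fin (2 ^ d - 1) → ZMod 2)
    (hb1 : β₁ ∈ suppS d) (hb2 : β₂ ∈ suppS d)
    (heq : β₁ + γ₁ = β₂ + γ₂)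
    (v : Fin (2 ^ d - 1)) (hv : ∀ t, d - ℓ ≤ t → t ≤ d → (v : ℕ) ≠ parentN^[t] i) :
    β₁ v = if β₁ pi = 0
      then (if ∃ t, 1 ≤ t ∧ t ≤ d ∧ parentN^[t] j = (v : ℕ) then γ₁ v + γ₂ v else 0)
      else (if ∃ t, 1 ≤ t ∧ t ≤ d ∧ parentN^[t] i = (v : ℕ) then γ₁ v + γ₂ v else 0) := by
  obtain ⟨L₁, hL11, hL12, hβ₁⟩ := hb1
  obtain ⟨L₂, hL21, hL22, hβ₂⟩ := hb2
  have heqv : ∀ w, β₂ w = β₁ w + γ₁ w + γ₂ w := eqv_lemma β₁ γ₁ β₂ γ₂ heq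
  -- γ values at the two deepest nodes
  have hγ1pi : γ₁ pi ≠ 0 := by
    obtain ⟨w, hw1, hw2⟩ := hγ₁.2
    have hw : w = pi := Fin.ext (by rw [hw1, hpi])
    rwa [hw] at hw2
  have hγ2pj : γ₂ pj ≠ 0 := by
    obtain ⟨w, hw1, hw2⟩ := hγ₂.2
    have hw : w = pj := Fin.ext (by rw [hw1, hpj])
    rwa [hw] at hw2
  have hIJ : ∀ t, 1 ≤ t → t ≤ d → parentN^[t] i ≠ parentN j := by
    intro t h1 h2 h
    have h4 : parentN^[t] i = parentN^[1] j := by simpa using h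
    have ht1 : t = 1 := depth_eq d i j t 1 hi1 hi2 hj1 hj2 h2 hd h4
    subst ht1
    exact hN (by simpa using h4)
  have hJI : ∀ t, 1 ≤ t → t ≤ d → parentN^[t] j ≠ parentN i := by
    intro t h1 h2 h
    have h4 : parentN^[t] j = parentN^[1] i := by simpa using h
    have ht1 : t = 1 := depth_eq d j i t 1 hj1 hj2 hi1 hi2 h2 hd h4
    subst ht1
    exact hN (by simpa using h4.symm)
  have hγ2pi : γ₂ pi = 0 := by
    by_contra h
    obtain ⟨t, h1, h2, h3⟩ := hγ₂.1 pi h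
    exact hJI t h1 h2 (h3.trans hpi)
  have hγ1pj : γ₁ pj = 0 := by
    by_contra h
    obtain ⟨t, h1, h2, h3⟩ := hγ₁.1 pj h
    exact hIJ t h1 h2 (h3.trans hpj)
  by_cases hb : β₁ pi = 0
  · rw [if_pos hb]
    have hβ2pi : β₂ pi ≠ 0 := by rw [heqv pi]; exact zf2 _ _ _ hb hγ1pi hγ2pi
    have hP2 : ∀ t, 1 ≤ t → parentN^[t] L₂ = parentN^[t] i :=
      parent_id d L₂ i hd hL21 hL22 hi1 hi2 β₂ hβ₂ pi hpi hβ2pi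
    have hβ2pj : β₂ pj = 0 := by
      apply supp_zero d L₂ β₂ hβ₂ pj
      intro t h1 h2 h
      exact hIJ t h1 h2 (((hP2 t h1).symm.trans h).trans hpj)
    have hβ1pj : β₁ pj ≠ 0 :=
      zf4 _ _ _ ((heqv pj).symm.trans hβ2pj) hγ1pj hγ2pj
    have hP1 : ∀ t, 1 ≤ t → parentN^[t] L₁ = parentN^[t] j :=
      parent_id d L₁ j hd hL11 hL12 hj1 hj2 β₁ hβ₁ pj hpj hβ1pj
    by_cases hvj : ∃ t, 1 ≤ t ∧ t ≤ d ∧ parentN^[t] j = (v : ℕ)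
    · rw [if_pos hvj]
      obtain ⟨t, ht1, ht2, ht3⟩ := hvj
      have htlt : t < d - ℓ := by
        by_contra hge
        exact hv t (by omega) ht2 (ht3.symm.trans (iterate_eq_of_le hlca1 t (by omega)).symm)
      have hvnotPi : ∀ s, 1 ≤ s → s ≤ d → parentN^[s] i ≠ (v : ℕ) := by
        intro s h1 h2 h
        have hst : s = t := depth_eq d i j s t hi1 hi2 hj1 hj2 h2 ht2 (h.trans ht3.symm)
        subst hst
        exact iterate_ne_of_ge hlca2 s (by omega) (h.trans ht3.symm)
      have hβ2v : β₂ v = 0 := by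
        apply supp_zero d L₂ β₂ hβ₂ v
        intro s h1 h2
        rw [hP2 s h1]
        exact hvnotPi s h1 h2
      exact zf5 _ _ _ ((heqv v).symm.trans hβ2v)
    · rw [if_neg hvj]
      push_neg at hvj
      apply supp_zero d L₁ β₁ hβ₁ v
      intro s h1 h2
      rw [hP1 s h1]
      exact hvj s h1 h2
  · rw [if_neg hb]
    have hP1 : ∀ t, 1 ≤ t → parentN^[t] L₁ = parentN^[t] i :=
      parent_id d L₁ i hd hL11 hL12 hi1 hi2 β₁ hβ₁ pi hpi hb
    have hβ1pj : β₁ pj = 0 := by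
      apply supp_zero d L₁ β₁ hβ₁ pj
      intro t h1 h2 h
      exact hIJ t h1 h2 (((hP1 t h1).symm.trans h).trans hpj)
    have hβ2pj : β₂ pj ≠ 0 := by rw [heqv pj]; exact zf3 _ _ _ hβ1pj hγ1pj hγ2pj
    have hP2 : ∀ t, 1 ≤ t → parentN^[t] L₂ = parentN^[t] j :=
      parent_id d L₂ j hd hL21 hL22 hj1 hj2 β₂ hβ₂ pj hpj hβ2pj
    by_cases hvi : ∃ t, 1 ≤ t ∧ t ≤ d ∧ parentN^[t] i = (v : ℕ)
    · rw [if_pos hvi]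
      obtain ⟨t, ht1, ht2, ht3⟩ := hvi
      have htlt : t < d - ℓ := by
        by_contra hge
        exact hv t (by omega) ht2 ht3.symm
      have hvnotPj : ∀ s, 1 ≤ s → s ≤ d → parentN^[s] j ≠ (v : ℕ) := by
        intro s h1 h2 h
        have hst : s = t := depth_eq d j i s t hj1 hj2 hi1 hi2 h2 ht2 (h.trans ht3.symm)
        subst hst
        exact iterate_ne_of_ge hlca2 s (by omega) (ht3.trans h.symm)
      have hβ2v : β₂ v = 0 := by
        apply supp_zero d L₂ β₂ hβ₂ v
        intro s h1 h2
        rw [hP2 s h1]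
        exact hvnotPj s h1 h2
      exact zf5 _ _ _ ((heqv v).symm.trans hβ2v)
    · rw [if_neg hvi]
      push_neg at hvi
      apply supp_zero d L₁ β₁ hβ₁ v
      intro s h1 h2
      rw [hP1 s h1]
      exact hvi s h1 h2

theorem stmt17 (d : ℕ) (hd : 1 ≤ d) (i j : ℕ)
    (hi : 2 ^ d - 1 ≤ i ∧ i < 2 ^ (d + 1) - 1)
    (hj : 2 ^ d - 1 ≤ j ∧ j < 2 ^ (d + 1) - 1)
    (γ₁ γ₂ : Fin (2 ^ d - 1) → ZMod 2)
    (hγ₁ : onPath d i γ₁) (hγ₂ : onPath d j γ₂)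
    (hN : parentN i ≠ parentN j)
    (ℓ : ℕ) (hℓ : ℓ < d)
    (hlca : parentN^[d - ℓ] i = parentN^[d - ℓ] j ∧
      parentN^[d - ℓ - 1] i ≠ parentN^[d - ℓ - 1] j) :
    Nat.card {p : (Fin (2 ^ d - 1) → ZMod 2) × (Fin (2 ^ d - 1) → ZMod 2) //
        p.1 ∈ suppS d ∧ p.2 ∈ suppS d ∧ p.1 + γ₁ = p.2 + γ₂} ≤ 2 ^ (ℓ + 2) ∧
      Nat.card ↥(((· + γ₁) '' suppS d) ∩ ((· + γ₂) '' suppS d)) ≤ 2 ^ (ℓ + 2) := by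
  classical
  obtain ⟨hi1, hi2⟩ := hi
  obtain ⟨hj1, hj2⟩ := hj
  have hpil : parentN i < 2 ^ d - 1 := by
    have h := (parentN_range d i hi1 hi2 1 hd).2
    have e : 2 ^ (d - 1 + 1) = 2 ^ d := by congr 1; omega
    rw [e] at h
    simpa using h
  have hnodelt : ∀ k : Fin (ℓ + 1), parentN^[d - (k : ℕ)] i < 2 ^ d - 1 := by
    intro k
    have hk : (k : ℕ) ≤ ℓ := Nat.lt_succ_iff.mp k.2
    have h1 : d - (k : ℕ) ≤ d := by omega
    have h := (parentN_range d i hi1 hi2 (d - (k : ℕ)) h1).2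
    have e : d - (d - (k : ℕ)) + 1 = (k : ℕ) + 1 := by omega
    rw [e] at h
    have e2 : 2 ^ ((k : ℕ) + 1) ≤ 2 ^ d := Nat.pow_le_pow_right (by norm_num) (by omega)
    omega
  have hpjl : parentN j < 2 ^ d - 1 := by
    have h := (parentN_range d j hj1 hj2 1 hd).2
    have e : 2 ^ (d - 1 + 1) = 2 ^ d := by congr 1; omega
    rw [e] at h
    simpa using h
  set T := {p : (Fin (2 ^ d - 1) → ZMod 2) × (Fin (2 ^ d - 1) → ZMod 2) //
      p.1 ∈ suppS d ∧ p.2 ∈ suppS d ∧ p.1 + γ₁ = p.2 + γ₂} with hT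
  have key : Nat.card T ≤ 2 ^ (ℓ + 2) := by
    let Φ : T → ZMod 2 × (Fin (ℓ + 1) → ZMod 2) :=
      fun p => (p.1.1 ⟨parentN i, hpil⟩,
        fun k => p.1.1 ⟨parentN^[d - (k : ℕ)] i, hnodelt k⟩)
    have hinj : Function.Injective Φ := by
      intro p q hpq
      have hbit : p.1.1 ⟨parentN i, hpil⟩ = q.1.1 ⟨parentN i, hpil⟩ :=
        congrArg Prod.fst hpq
      have hcomp : ∀ k : Fin (ℓ + 1),
          p.1.1 ⟨parentN^[d - (k : ℕ)] i, hnodelt k⟩ =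
          q.1.1 ⟨parentN^[d - (k : ℕ)] i, hnodelt k⟩ :=
        fun k => congrFun (congrArg Prod.snd hpq) k
      have h1 : p.1.1 = q.1.1 := by
        funext v
        by_cases hc : ∃ t, d - ℓ ≤ t ∧ t ≤ d ∧ (v : ℕ) = parentN^[t] i
        · obtain ⟨t, ht1, ht2, ht3⟩ := hc
          have hv' : v = ⟨parentN^[d - ((⟨d - t, by omega⟩ : Fin (ℓ + 1)) : ℕ)] i,
              hnodelt ⟨d - t, by omega⟩⟩ := by
            apply Fin.ext
            rw [ht3]
            show parentN^[t] i = parentN^[d - (d - t)] i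
            congr 1
            omega
          rw [hv']
          exact hcomp _
        · push_neg at hc
          have hp := determined d i j ℓ hd hi1 hi2 hj1 hj2 γ₁ γ₂ hγ₁ hγ₂ hN hℓ hlca.1 hlca.2
            ⟨parentN i, hpil⟩ ⟨parentN j, hpjl⟩ rfl rfl p.1.1 p.1.2 p.2.1 p.2.2.1 p.2.2.2 v hc
          have hq := determined d i j ℓ hd hi1 hi2 hj1 hj2 γ₁ γ₂ hγ₁ hγ₂ hN hℓ hlca.1 hlca.2
            ⟨parentN i, hpil⟩ ⟨parentN j, hpjl⟩ rfl rfl q.1.1 q.1.2 q.2.1 q.2.2.1 q.2.2.2 v hc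
          rw [hp, hq, hbit]
      have h2 : p.1.2 = q.1.2 := by
        funext w
        have e1 : p.1.2 w = p.1.1 w + γ₁ w + γ₂ w := eqv_lemma _ _ _ _ p.2.2.2 w
        have e2 : q.1.2 w = q.1.1 w + γ₁ w + γ₂ w := eqv_lemma _ _ _ _ q.2.2.2 w
        rw [e1, e2, h1]
      exact Subtype.ext (Prod.ext h1 h2)
    have hle := Nat.card_le_card_of_injective Φ hinj
    have hcard : Nat.card (ZMod 2 × (Fin (ℓ + 1) → ZMod 2)) = 2 ^ (ℓ + 2) := by
      rw [Nat.card_eq_fintype_card, Fintype.card_prod, Fintype.card_fun, ZMod.card,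
        Fintype.card_fin]
      ring
    rw [hcard] at hle
    exact hle
  refine ⟨key, ?_⟩
  have hself : ∀ g γ : Fin (2 ^ d - 1) → ZMod 2, g + γ + γ = g := by
    intro g γ
    funext w
    exact zf6 (g w) (γ w)
  have hle2 : Nat.card ↥(((· + γ₁) '' suppS d) ∩ ((· + γ₂) '' suppS d)) ≤ Nat.card T := by
    have hmem : ∀ x : ↥(((· + γ₁) '' suppS d) ∩ ((· + γ₂) '' suppS d)),
        ((x : Fin (2 ^ d - 1) → ZMod 2) + γ₁) ∈ suppS d ∧
        ((x : Fin (2 ^ d - 1) → ZMod 2) + γ₂) ∈ suppS d ∧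
        ((x : Fin (2 ^ d - 1) → ZMod 2) + γ₁) + γ₁ =
          ((x : Fin (2 ^ d - 1) → ZMod 2) + γ₂) + γ₂ := by
      intro x
      obtain ⟨⟨s₁, hs₁, he₁⟩, ⟨s₂, hs₂, he₂⟩⟩ := x.2
      refine ⟨?_, ?_, ?_⟩
      · rw [← he₁]
        show s₁ + γ₁ + γ₁ ∈ suppS d
        rw [hself s₁ γ₁]
        exact hs₁
      · rw [← he₂]
        show s₂ + γ₂ + γ₂ ∈ suppS d
        rw [hself s₂ γ₂]
        exact hs₂
      · rw [hself _ γ₁, hself _ γ₂]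
    let f : ↥(((· + γ₁) '' suppS d) ∩ ((· + γ₂) '' suppS d)) → T :=
      fun x => ⟨((x : Fin (2 ^ d - 1) → ZMod 2) + γ₁,
        (x : Fin (2 ^ d - 1) → ZMod 2) + γ₂), hmem x⟩
    apply Nat.card_le_card_of_injective f
    intro x y h
    have h1 : (x : Fin (2 ^ d - 1) → ZMod 2) + γ₁ = (y : Fin (2 ^ d - 1) → ZMod 2) + γ₁ :=
      congrArg (fun z : T => z.1.1) h
    apply Subtype.ext
    have h2 := congrArg (· + γ₁) h1
    simpa [hself] using h2
  exact hle2.trans key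
end
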